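/- Let N be even and let ξ₁ < ... < ξ_N be real numbers symmetric about 0, i.e., ξ_{N−k+1} = −ξ_k for all k. Then there exists a nonzero symmetric vector c ∈ ℝ^N (meaning c_{N−k+1} = c_k for all k) such that Σ_{k=1}^N c_k ξ_k^p = 0 for all p = 0, 1, ..., N−3. -/
import Mathlib

theorem symmetric_null_vector_even (N : ℕ) (hN : 0 < N) (hNe : Even N)
    (ξ : Fin N → ℝ) (hmono : StrictMono ξ) (hsym : ∀ k, ξ k.rev = -ξ k) :
    ∃ c : Fin N → ℝ, c ≠ 0 ∧ (∀ k, c k.rev = c k) ∧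
      ∀ p : ℕ, p + 3 ≤ N → ∑ k, c k * ξ k ^ p = 0 := by
  set m := N / 2 with hm
  have hmm : m + m = N := by
    obtain ⟨r, hr⟩ := hNe; omega
  have hm1 : 1 ≤ m := by omega
  have hmle : m ≤ N := by omega
  -- matrix of even-power constraints
  set M : Matrix (Fin (m - 1)) (Fin m) ℝ :=
    fun q j => ξ (Fin.castLE hmle j) ^ (2 * q.val) with hM
  obtain ⟨v, hv0, hfv⟩ : ∃ v : Fin m → ℝ, v ≠ 0 ∧ M.mulVec v = 0 := by
    have hni : ¬ Function.Injective M.mulVecLin := by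
      intro hinj
      have h1 := LinearMap.finrank_le_finrank_of_injective hinj
      simp only [Module.finrank_fintype_fun_eq_card, Fintype.card_fin] at h1
      omega
    rw [Function.not_injective_iff] at hni
    obtain ⟨a, b, hab, hne⟩ := hni
    refine ⟨a - b, sub_ne_zero.mpr hne, ?_⟩
    have : M.mulVecLin (a - b) = 0 := by rw [map_sub, hab, sub_self]
    simpa using this
  -- build c
  have hrevlt : ∀ k : Fin N, ¬ k.val < m → k.rev.val < m := by
    intro k hk
    simp only [Fin.val_rev]
    omega
  set c : Fin N → ℝ := fun k =>
    if h : k.val < m then v ⟨k.val, h⟩ else v ⟨k.rev.val, hrevlt k h⟩ with hc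
  have hsymc : ∀ k : Fin N, c k.rev = c k := by
    intro k
    by_cases h : k.val < m
    · have h2 : ¬ k.rev.val < m := by simp only [Fin.val_rev]; omega
      simp only [hc, dif_pos h, dif_neg h2]
      congr 1
      exact Fin.ext (by simp [Fin.rev_rev])
    · have h2 : k.rev.val < m := hrevlt k h
      simp only [hc, dif_pos h2, dif_neg h]
  refine ⟨c, ?_, hsymc, ?_⟩
  · intro hc0
    obtain ⟨j, hj⟩ := Function.ne_iff.mp hv0
    apply hj
    have : c (Fin.castLE hmle j) = 0 := by rw [hc0]; rfl
    simpa [hc, j.isLt] using this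
  · intro p hp
    rcases Nat.even_or_odd p with hpe | hpo
    · -- even case
      obtain ⟨q, hq⟩ := hpe
      have hqlt : q < m - 1 := by omega
      have hkey : M.mulVec v ⟨q, hqlt⟩ = 0 := by rw [hfv]; rfl
      have hkey' : ∑ j : Fin m, v j * ξ (Fin.castLE hmle j) ^ p = 0 := by
        rw [← hkey]
        simp only [Matrix.mulVec, dotProduct, hM]
        refine Finset.sum_congr rfl fun j _ => ?_
        rw [mul_comm]
        congr 2
        omega
      have hsplit : ∑ k : Fin N, c k * ξ k ^ p =
          ∑ k ∈ Finset.univ.filter (fun k : Fin N => k.val < m), c k * ξ k ^ p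
          + ∑ k ∈ Finset.univ.filter (fun k : Fin N => ¬ k.val < m), c k * ξ k ^ p :=
        (Finset.sum_filter_add_sum_filter_not _ _ _).symm
      have hsecond : ∑ k ∈ Finset.univ.filter (fun k : Fin N => ¬ k.val < m), c k * ξ k ^ p
          = ∑ k ∈ Finset.univ.filter (fun k : Fin N => k.val < m), c k * ξ k ^ p := by
        refine Finset.sum_nbij' Fin.rev Fin.rev ?_ ?_ ?_ ?_ ?_
        · intro a ha
          simp only [Finset.mem_filter, Finset.mem_univ, true_and] at ha ⊢
          exact hrevlt a ha
        · intro a ha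
          simp only [Finset.mem_filter, Finset.mem_univ, true_and, Fin.val_rev] at ha ⊢
          omega
        · intro a _; exact Fin.rev_rev a
        · intro a _; exact Fin.rev_rev a
        · intro a _
          rw [hsymc, hsym, Even.neg_pow ⟨q, hq⟩]
      have hhalf : ∑ k ∈ Finset.univ.filter (fun k : Fin N => k.val < m), c k * ξ k ^ p
          = ∑ j : Fin m, v j * ξ (Fin.castLE hmle j) ^ p := by
        refine Finset.sum_nbij' (fun k : Fin N => (⟨k.val % m, Nat.mod_lt _ hm1⟩ : Fin m))
          (Fin.castLE hmle) (fun a _ => Finset.mem_univ _) ?_ ?_ ?_ ?_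
        · intro a _
          simp only [Finset.mem_filter, Finset.mem_univ, true_and, Fin.coe_castLE]
          exact a.isLt
        · intro a ha
          simp only [Finset.mem_filter, Finset.mem_univ, true_and] at ha
          exact Fin.ext (by simp [Nat.mod_eq_of_lt ha])
        · intro a _
          exact Fin.ext (by simp [Nat.mod_eq_of_lt a.isLt])
        · intro a ha
          simp only [Finset.mem_filter, Finset.mem_univ, true_and] at ha
          have h1 : (Fin.castLE hmle (⟨a.val % m, Nat.mod_lt _ hm1⟩ : Fin m)) = a :=
            Fin.ext (by simp [Nat.mod_eq_of_lt ha])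
          rw [h1]
          congr 1
          simp only [hc, dif_pos ha]
          congr 1
          exact Fin.ext (by simp [Nat.mod_eq_of_lt ha])
      rw [hsplit, hsecond, hhalf, hkey']
      ring
    · -- odd case
      have h1 : ∑ k : Fin N, c k * ξ k ^ p = ∑ k : Fin N, c k.rev * ξ k.rev ^ p :=
        (Fintype.sum_equiv (Equiv.refl _).symm _ _ fun k => rfl).symm.trans
          (Fintype.sum_bijective Fin.rev Fin.rev_bijective _ _ (fun k => rfl)).symm
      have h2 : ∑ k : Fin N, c k.rev * ξ k.rev ^ p = -∑ k : Fin N, c k * ξ k ^ p := by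
        rw [← Finset.sum_neg_distrib]
        refine Finset.sum_congr rfl fun k _ => ?_
        rw [hsymc, hsym, hpo.neg_pow]
        ring
      have := h1.trans h2
      linarith
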